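/- arXiv:2010.14472 — 3 statements merged into one kernel-verified Lean document; each statement's English description precedes it below -/
import Mathlib

section
/- Let (X_i) be a sequence of independent identically distributed Bernoulli random variables with P(X_i = 1) = p. Then for any δ > 0 and n ∈ ℤ⁺, P(Σ_{i=1}^n X_i ≥ (1+δ)np) ≤ exp(−(δ²/(2+δ))·np). -/
/-! Chernoff's method: Markov's inequality applied to `exp (t S)` gives
`P(S ≥ a) ≤ exp (-t a) E[exp (t S)]`, and for a sum of `n` independent indicators of probability
`p` the moment generating function is `(1 + (eᵗ - 1) p)ⁿ ≤ exp (n p (eᵗ - 1))`. Taking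
`a = (1 + δ) n p` and `t = 2δ / (δ + 2)`, the exponent `n p (eᵗ - 1 - t (1 + δ))` is at most
`-n p δ² / (2 + δ)` because `eᵗ ≤ 1 + δ`, i.e. `log (1 + δ) ≥ 2δ / (δ + 2)`. -/

open Real MeasureTheory ProbabilityTheory Finset

lemma exp_sub_one_sub_mul_one_add_le (δ : ℝ) (hδ : 0 ≤ δ) :
    exp (2 * δ / (δ + 2)) - 1 - 2 * δ / (δ + 2) * (1 + δ) ≤ -(δ ^ 2 / (2 + δ)) := by
  have hexp : exp (2 * δ / (δ + 2)) ≤ 1 + δ := by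
    simpa [exp_log (by linarith : 0 < 1 + δ)] using exp_le_exp.2 (le_log_one_add_of_nonneg hδ)
  have hδ2 : δ + 2 ≠ 0 := by positivity
  have hcoeff : 2 * δ / (δ + 2) * (1 + δ) = δ + δ ^ 2 / (2 + δ) := by
    rw [add_comm 2 δ]; field_simp; ring
  linarith

namespace ProbabilityTheory

section ZeroOne

variable {Ω : Type*} {X : Ω → ℝ}

lemma eq_indicator_of_zero_or_one (hX : ∀ ω, X ω = 0 ∨ X ω = 1) :
    X = {ω | X ω = 1}.indicator 1 := by
  funext ω
  rcases hX ω with h | h <;> simp [h]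

lemma exp_mul_of_zero_or_one (hX : ∀ ω, X ω = 0 ∨ X ω = 1) (t : ℝ) :
    (fun ω ↦ exp (t * X ω)) = fun ω ↦ 1 + (exp t - 1) * X ω := by
  funext ω
  rcases hX ω with h | h <;> simp [h]

variable [MeasurableSpace Ω] {μ : Measure Ω} (hm : Measurable X) (hX : ∀ ω, X ω = 0 ∨ X ω = 1)
include hm hX

lemma integrable_of_zero_or_one [IsFiniteMeasure μ] : Integrable X μ := by
  rw [eq_indicator_of_zero_or_one hX]
  exact (integrable_const 1).indicator (hm (measurableSet_singleton 1))

lemma integrable_exp_mul_of_zero_or_one [IsFiniteMeasure μ] (t : ℝ) :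
    Integrable (fun ω ↦ exp (t * X ω)) μ := by
  rw [exp_mul_of_zero_or_one hX]
  exact (integrable_const 1).add ((integrable_of_zero_or_one hm hX).const_mul _)

lemma integral_of_zero_or_one : ∫ ω, X ω ∂μ = μ.real {ω | X ω = 1} := by
  conv_lhs => rw [eq_indicator_of_zero_or_one hX]
  exact integral_indicator_one (hm (measurableSet_singleton 1))

lemma mgf_of_zero_or_one [IsProbabilityMeasure μ] (t : ℝ) :
    mgf X μ t = 1 + (exp t - 1) * μ.real {ω | X ω = 1} := by
  rw [mgf, exp_mul_of_zero_or_one hX, integral_add (integrable_const 1)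
    ((integrable_of_zero_or_one hm hX).const_mul _), integral_const_mul,
    integral_of_zero_or_one hm hX]
  simp

end ZeroOne

lemma measureReal_sum_ge_le_exp_of_zero_or_one {Ω ι : Type*} [MeasurableSpace Ω]
    {μ : Measure Ω} [IsProbabilityMeasure μ] {X : ι → Ω → ℝ} (hm : ∀ i, Measurable (X i)) (hindep : iIndepFun X μ)
    (hX : ∀ i ω, X i ω = 0 ∨ X i ω = 1) {q : ℝ} (hq : ∀ i, μ.real {ω | X i ω = 1} = q)
    (s : Finset ι) (a : ℝ) {t : ℝ} (ht : 0 ≤ t) :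
    μ.real {ω | a ≤ ∑ i ∈ s, X i ω} ≤ exp (-t * a + #s * ((exp t - 1) * q)) := by
  have hmgf : mgf (∑ i ∈ s, X i) μ t ≤ exp (#s * ((exp t - 1) * q)) := by
    rw [hindep.mgf_sum hm, exp_nat_mul]
    refine (prod_le_prod (fun i _ ↦ mgf_nonneg) fun i _ ↦ ?_).trans_eq (prod_const _)
    rw [mgf_of_zero_or_one (hm i) (hX i), hq]
    linarith [add_one_le_exp ((exp t - 1) * q)]
  have hmarkov := measure_ge_le_exp_mul_mgf a ht
    (hindep.integrable_exp_mul_sum (s := s) hm fun i _ ↦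
      integrable_exp_mul_of_zero_or_one (hm i) (hX i) t)
  simp only [Finset.sum_apply] at hmarkov
  rw [exp_add]
  exact hmarkov.trans (mul_le_mul_of_nonneg_left hmgf (exp_pos _).le)

end ProbabilityTheory

theorem stmt6_general {Ω : Type*} [MeasurableSpace Ω] (μ : Measure Ω) [IsProbabilityMeasure μ]
    (X : ℕ → Ω → ℝ) (p : ℝ)
    (hmeas : ∀ i, Measurable (X i))
    (hindep : iIndepFun X μ)
    (h01 : ∀ i ω, X i ω = 0 ∨ X i ω = 1)
    (hp1 : ∀ i, μ {ω | X i ω = 1} = ENNReal.ofReal p)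
    (δ : ℝ) (hδ : 0 < δ) (n : ℕ) :
    μ {ω | (1 + δ) * n * p ≤ ∑ i ∈ Finset.range n, X i ω}
      ≤ ENNReal.ofReal (Real.exp (-(δ ^ 2 / (2 + δ)) * (n * p))) := by
  rcases le_or_gt p 0 with hp | hp
  · refine prob_le_one.trans ?_
    rw [ENNReal.one_le_ofReal, one_le_exp_iff]
    exact mul_nonneg_of_nonpos_of_nonpos (neg_nonpos.2 (by positivity))
      (mul_nonpos_of_nonneg_of_nonpos n.cast_nonneg hp)
  · have hq : ∀ i, μ.real {ω | X i ω = 1} = p := fun i ↦ by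
      rw [measureReal_def, hp1, ENNReal.toReal_ofReal hp.le]
    have hchernoff := measureReal_sum_ge_le_exp_of_zero_or_one hmeas hindep h01 hq (range n)
      ((1 + δ) * n * p) (by positivity : 0 ≤ 2 * δ / (δ + 2))
    rw [← ofReal_measureReal]
    refine ENNReal.ofReal_le_ofReal (hchernoff.trans (exp_le_exp.2 ?_))
    rw [card_range]
    linarith [mul_le_mul_of_nonneg_right (exp_sub_one_sub_mul_one_add_le δ hδ.le)
      (by positivity : (0 : ℝ) ≤ n * p)]

theorem stmt6 {Ω : Type*} [MeasurableSpace Ω] (μ : Measure Ω) [IsProbabilityMeasure μ]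
    (X : ℕ → Ω → ℝ) (p : ℝ)
    (hmeas : ∀ i, Measurable (X i))
    (hindep : iIndepFun X μ)
    (hident : ∀ i j, IdentDistrib (X i) (X j) μ μ)
    (h01 : ∀ i ω, X i ω = 0 ∨ X i ω = 1)
    (hp1 : ∀ i, μ {ω | X i ω = 1} = ENNReal.ofReal p)
    (δ : ℝ) (hδ : 0 < δ) (n : ℕ) (hn : 0 < n) :
    μ {ω | (1 + δ) * n * p ≤ ∑ i ∈ Finset.range n, X i ω}
      ≤ ENNReal.ofReal (Real.exp (-(δ ^ 2 / (2 + δ)) * (n * p))) :=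
  stmt6_general μ X p hmeas hindep h01 hp1 δ hδ n
end

section
/- Let h, H be positive integers with H dividing h and h ≥ (n+1)²¹·H for some integer n ≥ 2. For 0 ≤ i < j ≤ 2(n+1)⁶ − 1, set h_i = h + iH and h_j = h + jH, and let M = {m ∈ [0, H_n/H] ∩ ℤ : m·H ≡ 0 mod h_j} where H_n is a common multiple of h_i and h_j. If two periodic words with periods h_i and h_j are realigned at both r₁ < r₂ (i.e. both shifted words simultaneously start their periods), then the number of elements of M in [r₁, r₂] is at least h/(2(n+1)⁶·H). -/
theorem stmt16 (n h H : ℕ) (hn : 2 ≤ n) (hH : 0 < H) (hdvd : H ∣ h)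
    (hbig : (n + 1) ^ 21 * H ≤ h)
    (i j : ℕ) (hij : i < j) (hj : j ≤ 2 * (n + 1) ^ 6 - 1)
    (Hn : ℕ) (hHn : 0 < Hn) (hHi : (h + i * H) ∣ Hn) (hHj : (h + j * H) ∣ Hn)
    (r₁ r₂ : ℕ) (hr : r₁ < r₂) (hr₂ : r₂ ≤ Hn / H)
    (hre1 : (h + i * H) ∣ r₁ * H ∧ (h + j * H) ∣ r₁ * H)
    (hre2 : (h + i * H) ∣ r₂ * H ∧ (h + j * H) ∣ r₂ * H) :
    (h : ℝ) / (2 * (n + 1) ^ 6 * H)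
      ≤ (((Finset.Icc r₁ r₂).filter (fun m => (h + j * H) ∣ m * H)).card : ℝ) := by
  obtain ⟨h1i, h1j⟩ := hre1
  obtain ⟨h2i, h2j⟩ := hre2
  have hh : 0 < h := lt_of_lt_of_le (by positivity) hbig
  have hdvdj : H ∣ h + j * H := hdvd.add ⟨j, mul_comm j H⟩
  have hdvdi : H ∣ h + i * H := hdvd.add ⟨i, mul_comm i H⟩
  set q := (h + j * H) / H with hqdef
  set p := (h + i * H) / H with hpdef
  have hqH : q * H = h + j * H := Nat.div_mul_cancel hdvdj
  have hpH : p * H = h + i * H := Nat.div_mul_cancel hdvdi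
  have hq0 : 0 < q := by
    rcases Nat.eq_zero_or_pos q with h0 | h0
    · exfalso; have := hqH; rw [h0, zero_mul] at this; omega
    · exact h0
  have hp0 : 0 < p := by
    rcases Nat.eq_zero_or_pos p with h0 | h0
    · exfalso; have := hpH; rw [h0, zero_mul] at this; omega
    · exact h0
  -- divisibilities of r₁, r₂ by p and q
  have hcancel : ∀ a b : ℕ, a * H ∣ b * H → a ∣ b := fun a b hab =>
    (Nat.mul_dvd_mul_iff_right hH).mp hab
  have hq1 : q ∣ r₁ := hcancel q r₁ (by rw [hqH]; exact h1j)
  have hq2 : q ∣ r₂ := hcancel q r₂ (by rw [hqH]; exact h2j)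
  have hp1 : p ∣ r₁ := hcancel p r₁ (by rw [hpH]; exact h1i)
  have hp2 : p ∣ r₂ := hcancel p r₂ (by rw [hpH]; exact h2i)
  -- the image set inside the filter
  have hsub : ∀ k ∈ Finset.Icc (r₁ / q) (r₂ / q),
      k * q ∈ (Finset.Icc r₁ r₂).filter (fun m => (h + j * H) ∣ m * H) := by
    intro k hk
    rw [Finset.mem_Icc] at hk
    rw [Finset.mem_filter, Finset.mem_Icc]
    refine ⟨⟨?_, ?_⟩, ?_⟩
    · calc r₁ = r₁ / q * q := (Nat.div_mul_cancel hq1).symm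
        _ ≤ k * q := Nat.mul_le_mul_right _ hk.1
    · calc k * q ≤ r₂ / q * q := Nat.mul_le_mul_right _ hk.2
        _ = r₂ := Nat.div_mul_cancel hq2
    · rw [← hqH, mul_assoc]
      exact dvd_mul_left _ k
  set a := r₁ / q with ha
  set b := r₂ / q with hb
  have hab : a ≤ b := Nat.div_le_div_right hr.le
  have hcard : b - a + 1 ≤ ((Finset.Icc r₁ r₂).filter (fun m => (h + j * H) ∣ m * H)).card := by
    have := Finset.card_le_card_of_injOn (fun k => k * q) hsub
      (fun x _ y _ hxy => Nat.eq_of_mul_eq_mul_right hq0 hxy)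
    rwa [Nat.card_Icc, Nat.sub_add_comm hab] at this
  -- main counting inequality
  have hsubdiff : r₂ - r₁ = (b - a) * q := by
    rw [Nat.sub_mul, Nat.div_mul_cancel hq1, Nat.div_mul_cancel hq2]
  have hlcm : Nat.lcm p q ∣ r₂ - r₁ :=
    Nat.lcm_dvd (Nat.dvd_sub hp2 hp1) (Nat.dvd_sub hq2 hq1)
  have hdiffpos : 0 < r₂ - r₁ := by omega
  have hlcmle : Nat.lcm p q ≤ r₂ - r₁ := Nat.le_of_dvd hdiffpos hlcm
  have hqp : q - p = j - i := by
    have : (q - p) * H = (j - i) * H := by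
      rw [Nat.sub_mul, Nat.sub_mul, hqH, hpH]; omega
    exact Nat.eq_of_mul_eq_mul_right hH this
  have hgcd : Nat.gcd p q ∣ j - i := by
    rw [← hqp]; exact Nat.dvd_sub (Nat.gcd_dvd_right p q) (Nat.gcd_dvd_left p q)
  have hgcdle : Nat.gcd p q ≤ j - i := Nat.le_of_dvd (by omega) hgcd
  have hmul : p * q ≤ (j - i) * ((b - a) * q) := by
    calc p * q = Nat.gcd p q * Nat.lcm p q := (Nat.gcd_mul_lcm p q).symm
      _ ≤ (j - i) * (r₂ - r₁) := Nat.mul_le_mul hgcdle hlcmle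
      _ = (j - i) * ((b - a) * q) := by rw [hsubdiff]
  have hple : p ≤ (j - i) * (b - a) := by
    have : p * q ≤ (j - i) * (b - a) * q := by rw [mul_assoc]; exact hmul
    exact Nat.le_of_mul_le_mul_right this hq0
  -- h ≤ card * (2(n+1)^6) * H
  have hhp : h ≤ p * H := by rw [hpH]; omega
  have hji : j - i ≤ 2 * (n + 1) ^ 6 := by omega
  have hfin : h ≤ ((Finset.Icc r₁ r₂).filter (fun m => (h + j * H) ∣ m * H)).card
      * (2 * (n + 1) ^ 6) * H := by
    calc h ≤ p * H := hhp
      _ ≤ (j - i) * (b - a) * H := Nat.mul_le_mul_right _ hple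
      _ ≤ (2 * (n + 1) ^ 6) * (b - a + 1) * H := by
          apply Nat.mul_le_mul_right
          exact Nat.mul_le_mul hji (by omega)
      _ ≤ (2 * (n + 1) ^ 6) *
            ((Finset.Icc r₁ r₂).filter (fun m => (h + j * H) ∣ m * H)).card * H := by
          apply Nat.mul_le_mul_right
          exact Nat.mul_le_mul_left _ hcard
      _ = _ := by ring
  have hpos : (0 : ℝ) < 2 * (n + 1) ^ 6 * H := by positivity
  rw [div_le_iff₀ hpos]
  have : (h : ℝ) ≤ (((Finset.Icc r₁ r₂).filter (fun m => (h + j * H) ∣ m * H)).card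
      * (2 * (n + 1) ^ 6) * H : ℕ) := by exact_mod_cast hfin
  push_cast at this ⊢
  linarith
end

section
/- Suppose μ(A ∩ S) ≥ (1−ε)·μ(S) where S is the disjoint union of two measurable families {D_i}_{i<I} and {E_j}_{j<J} of sets of equal measure within each family, with μ(∪D_i)/μ(∪E_j) ∈ (1/400, 1/20). Then μ(A ∩ ∪D_i) ≥ (1 − 500ε)·μ(∪D_i) and μ(A ∩ ∪E_j) ≥ (1 − 500ε)·μ(∪E_j); moreover, the number of indices i with μ(A ∩ D_i) ≤ (1 − 10⁵ε)·μ(D_i) is at most I/200, and similarly the number of indices j with μ(A ∩ E_j) ≤ (1 − 10⁵ε)·μ(E_j) is at most J/200. -/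
open MeasureTheory
open scoped Classical

lemma count_bad17 {X : Type*} [MeasurableSpace X] (μ : Measure X) [IsFiniteMeasure μ]
    {I : ℕ} (hI : 0 < I) (D : Fin I → Set X)
    (hm : ∀ i, MeasurableSet (D i))
    (hd : Pairwise (Function.onFun Disjoint D))
    (heq : ∀ i i', μ (D i) = μ (D i'))
    (A : Set X) (hA : MeasurableSet A)
    (ε : ℝ) (hε : 0 < ε)
    (hdpos : 0 < (μ (⋃ i, D i)).toReal)
    (hbound : (μ (⋃ i, D i)).toReal - (μ (A ∩ ⋃ i, D i)).toReal
      ≤ 500 * ε * (μ (⋃ i, D i)).toReal) :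
    ((Finset.univ.filter (fun i : Fin I =>
        (μ (A ∩ D i)).toReal ≤ (1 - 10 ^ 5 * ε) * (μ (D i)).toReal)).card : ℝ)
      ≤ (I : ℝ) / 200 := by
  have hfin : ∀ s : Set X, μ s ≠ ⊤ := fun s => measure_ne_top μ s
  set i0 : Fin I := ⟨0, hI⟩
  set m := (μ (D i0)).toReal with hm0
  set dd := (μ (⋃ i, D i)).toReal with hdd
  have hmeq : ∀ i, (μ (D i)).toReal = m := fun i => by rw [hm0, heq i i0]
  have hdsum : dd = I * m := by
    rw [hdd, measure_iUnion hd hm, tsum_fintype,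
      ENNReal.toReal_sum (fun i _ => hfin _)]
    simp [hmeq]
  have hm_pos : 0 < m := by
    rcases lt_or_ge 0 m with h | h
    · exact h
    · exfalso; have : dd ≤ 0 := by rw [hdsum]; nlinarith [(Nat.cast_pos (α := ℝ)).mpr hI]
      linarith
  set B := Finset.univ.filter (fun i : Fin I =>
      (μ (A ∩ D i)).toReal ≤ (1 - 10 ^ 5 * ε) * (μ (D i)).toReal) with hB
  have hdiff : ∀ i, (μ (A ∩ D i)).toReal + (μ (D i \ A)).toReal = (μ (D i)).toReal := by
    intro i
    rw [← ENNReal.toReal_add (hfin _) (hfin _), Set.inter_comm, measure_inter_add_diff _ hA]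
  -- sum over bad set is at most measure of (⋃ D) \ A
  have hsumle : ∑ i ∈ B, (μ (D i \ A)).toReal ≤ dd - (μ (A ∩ ⋃ i, D i)).toReal := by
    have h1 : ∑ i ∈ B, μ (D i \ A) = μ (⋃ i ∈ B, D i \ A) :=
      (measure_biUnion_finset
        (fun i _ j _ hij => (hd hij).mono Set.diff_subset Set.diff_subset)
        (fun i _ => (hm i).diff hA)).symm
    have h2 : μ (⋃ i ∈ B, D i \ A) ≤ μ ((⋃ i, D i) \ A) := by
      refine measure_mono ?_
      intro x hx
      simp only [Set.mem_iUnion] at hx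
      obtain ⟨i, _, hxi⟩ := hx
      exact ⟨Set.mem_iUnion.mpr ⟨i, hxi.1⟩, hxi.2⟩
    have h3 : (μ (A ∩ ⋃ i, D i)).toReal + (μ ((⋃ i, D i) \ A)).toReal = dd := by
      rw [← ENNReal.toReal_add (hfin _) (hfin _), Set.inter_comm,
        measure_inter_add_diff _ hA]
    have h4 : ∑ i ∈ B, (μ (D i \ A)).toReal ≤ (μ ((⋃ i, D i) \ A)).toReal := by
      rw [← ENNReal.toReal_sum (fun i _ => hfin _)]
      exact ENNReal.toReal_mono (hfin _) (h1 ▸ h2)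
    linarith
  have hcard : (B.card : ℝ) * (10 ^ 5 * ε * m) ≤ ∑ i ∈ B, (μ (D i \ A)).toReal := by
    have := Finset.card_nsmul_le_sum B (fun i => (μ (D i \ A)).toReal)
      (10 ^ 5 * ε * m) ?_
    · simpa [nsmul_eq_mul] using this
    · intro i hi
      rw [hB, Finset.mem_filter] at hi
      have hle := hi.2
      rw [hmeq i] at hle
      have := hdiff i
      rw [hmeq i] at this
      nlinarith
  have hfinal : (B.card : ℝ) * (10 ^ 5 * ε * m) ≤ 500 * ε * ((I : ℝ) * m) := by
    calc (B.card : ℝ) * (10 ^ 5 * ε * m) ≤ dd - (μ (A ∩ ⋃ i, D i)).toReal :=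
          le_trans hcard hsumle
      _ ≤ 500 * ε * dd := hbound
      _ = 500 * ε * ((I : ℝ) * m) := by rw [hdsum]
  nlinarith [mul_pos hε hm_pos, Nat.cast_nonneg (α := ℝ) B.card]

theorem stmt17 {X : Type*} [MeasurableSpace X] (μ : Measure X) [IsFiniteMeasure μ]
    (I J : ℕ) (hI : 0 < I) (hJ : 0 < J)
    (D : Fin I → Set X) (E : Fin J → Set X)
    (hDmeas : ∀ i, MeasurableSet (D i)) (hEmeas : ∀ j, MeasurableSet (E j))
    (hDdisj : Pairwise (Function.onFun Disjoint D))
    (hEdisj : Pairwise (Function.onFun Disjoint E))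
    (hDE : ∀ i j, Disjoint (D i) (E j))
    (hDeq : ∀ i i', μ (D i) = μ (D i'))
    (hEeq : ∀ j j', μ (E j) = μ (E j'))
    (A : Set X) (hA : MeasurableSet A)
    (ε : ℝ) (hε0 : 0 < ε) (hε1 : ε < 1 / 10 ^ 8)
    (hratio1 : 1 / 400 < (μ (⋃ i, D i)).toReal / (μ (⋃ j, E j)).toReal)
    (hratio2 : (μ (⋃ i, D i)).toReal / (μ (⋃ j, E j)).toReal < 1 / 20)
    (hAS : (1 - ε) * (μ ((⋃ i, D i) ∪ ⋃ j, E j)).toReal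
      ≤ (μ (A ∩ ((⋃ i, D i) ∪ ⋃ j, E j))).toReal) :
    (1 - 500 * ε) * (μ (⋃ i, D i)).toReal ≤ (μ (A ∩ ⋃ i, D i)).toReal ∧
    (1 - 500 * ε) * (μ (⋃ j, E j)).toReal ≤ (μ (A ∩ ⋃ j, E j)).toReal ∧
    ((Finset.univ.filter (fun i : Fin I =>
        (μ (A ∩ D i)).toReal ≤ (1 - 10 ^ 5 * ε) * (μ (D i)).toReal)).card : ℝ)
      ≤ (I : ℝ) / 200 ∧
    ((Finset.univ.filter (fun j : Fin J =>
        (μ (A ∩ E j)).toReal ≤ (1 - 10 ^ 5 * ε) * (μ (E j)).toReal)).card : ℝ)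
      ≤ (J : ℝ) / 200 := by
  have hfin : ∀ s : Set X, μ s ≠ ⊤ := fun s => measure_ne_top μ s
  set SD := ⋃ i, D i with hSD
  set SE := ⋃ j, E j with hSE
  have hSDm : MeasurableSet SD := MeasurableSet.iUnion hDmeas
  have hSEm : MeasurableSet SE := MeasurableSet.iUnion hEmeas
  have hdisjS : Disjoint SD SE := by
    rw [hSD, hSE, Set.disjoint_iUnion_left]
    intro i
    rw [Set.disjoint_iUnion_right]
    intro j
    exact hDE i j
  set d := (μ SD).toReal with hd
  set e := (μ SE).toReal with he
  set aD := (μ (A ∩ SD)).toReal with haD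
  set aE := (μ (A ∩ SE)).toReal with haE
  have hd0 : 0 ≤ d := ENNReal.toReal_nonneg
  have he0 : 0 ≤ e := ENNReal.toReal_nonneg
  have he_pos : 0 < e := by
    rcases lt_or_ge 0 e with h | h
    · exact h
    · exfalso
      have : e = 0 := le_antisymm h he0
      rw [this, div_zero] at hratio1
      norm_num at hratio1
  have he_lt : e < 400 * d := by
    have := (lt_div_iff₀ he_pos).mp hratio1
    linarith
  have hd_lt : d < e / 20 := by
    have := (div_lt_iff₀ he_pos).mp hratio2
    linarith
  have hd_pos : 0 < d := by linarith
  -- split measures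
  have hStot : (μ (SD ∪ SE)).toReal = d + e := by
    rw [measure_union hdisjS hSEm, ENNReal.toReal_add (hfin _) (hfin _)]
  have hAtot : (μ (A ∩ (SD ∪ SE))).toReal = aD + aE := by
    rw [Set.inter_union_distrib_left,
      measure_union (hdisjS.mono Set.inter_subset_right Set.inter_subset_right)
        (hA.inter hSEm),
      ENNReal.toReal_add (hfin _) (hfin _)]
  rw [hStot, hAtot] at hAS
  have haDle : aD ≤ d := ENNReal.toReal_mono (hfin _) (measure_mono Set.inter_subset_right)
  have haEle : aE ≤ e := ENNReal.toReal_mono (hfin _) (measure_mono Set.inter_subset_right)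
  have hDbound : d - aD ≤ 500 * ε * d := by nlinarith
  have hEbound : e - aE ≤ 500 * ε * e := by nlinarith
  refine ⟨by nlinarith, by nlinarith, ?_, ?_⟩
  · exact count_bad17 μ hI D hDmeas hDdisj hDeq A hA ε hε0 hd_pos hDbound
  · exact count_bad17 μ hJ E hEmeas hEdisj hEeq A hA ε hε0 he_pos hEbound
end
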